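/- Let E be a real inner product space and F : E → ℝ a differentiable function whose gradient ∇F is L-Lipschitz for some L > 0, and suppose F is bounded below: F(x) ≥ F_* for all x ∈ E. Fix β ∈ (0,1) and set γ = 1 + β²/(1−β). Let Θ, g, m : ℕ → E and η : ℕ → ℝ satisfy m_0 = 0, m_{t+1} = β·m_t + g_t, Θ_{t+1} = Θ_t − η_t·((1−β)·g_t + β·m_{t+1}), with 0 < η_m ≤ η_t ≤ η_0 ≤ (γ−β²)/(6Lγ²) for all t. Suppose there is B ≥ 0 such that for all t, ‖g_t − ∇F(Θ_t)‖² ≤ B and ‖m_t − g_t/(1−β)‖² ≤ B. Then for every T ≥ 1: min over 0 ≤ t < T of ‖∇F(Θ_t)‖² ≤ (4(F(Θ_0) − F_*)/(η_m·T))·(1 + 1/(1−β)) + (η_0/(η_m·β³))·(6 + 24L·η_0 + 24L·η_0/(1−β)²)·B. -/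

import Mathlib

/-!
The update direction is a perturbed, rescaled gradient step:
`(1 - β) g_t + β m_{t+1} = γ ∇F(Θ_t) + γ (g_t - ∇F(Θ_t)) + β² (m_t - g_t / (1 - β))`,
where both error terms have squared norm at most `B`. The descent lemma for `L`-smooth `F`,
Young's inequality on the cross terms and the step-size condition `L η_t γ² ≤ (γ - β²) / 6` give
`η_m (γ - β²) / 4 · ‖∇F(Θ_t)‖² ≤ F(Θ_t) - F(Θ_{t+1}) + η_0 C B` with
`C = (γ + β²) / 2 + 3/2 · L η_0 (γ² + β⁴)`. Summing over `t < T` telescopes, the minimum is at most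
the average, and the estimates `γ - β² ≥ max (1, β³ / (1 - β))`, `γ + β² ≤ 2 + β² / (1 - β)`,
`γ² + β⁴ ≤ 2 + 2 / (1 - β)²` turn the constants into the stated ones.
-/

open scoped NNReal RealInnerProductSpace
open Finset

theorem norm_add_add_sq_le {E : Type*} [SeminormedAddCommGroup E] (u v w : E) :
    ‖u + v + w‖ ^ 2 ≤ 3 * (‖u‖ ^ 2 + ‖v‖ ^ 2 + ‖w‖ ^ 2) := by
  have h : ‖u + v + w‖ ≤ ‖u‖ + ‖v‖ + ‖w‖ := norm_add₃_le
  nlinarith [norm_nonneg (u + v + w), sq_nonneg (‖u‖ - ‖v‖), sq_nonneg (‖u‖ - ‖w‖),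
    sq_nonneg (‖v‖ - ‖w‖)]

section PerturbedGradientStep

variable {E : Type*} [NormedAddCommGroup E] [InnerProductSpace ℝ E]

theorem neg_real_inner_le_half_add_sq (x y : E) : -⟪x, y⟫ ≤ (‖x‖ ^ 2 + ‖y‖ ^ 2) / 2 := by
  nlinarith [norm_add_sq_real x y, sq_nonneg ‖x + y‖]

theorem Differentiable.le_add_inner_gradient_add_sq [CompleteSpace E] {F : E → ℝ} {K : ℝ≥0}
    (hF : Differentiable ℝ F) (hK : LipschitzWith K (gradient F)) (x y : E) :
    F y ≤ F x + ⟪gradient F x, y - x⟫ + K / 2 * ‖y - x‖ ^ 2 := by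
  set h := y - x
  set φ : ℝ → ℝ := fun s ↦ F (x + s • h) - s * ⟪gradient F x, h⟫ - K / 2 * s ^ 2 * ‖h‖ ^ 2
  have hφ (s : ℝ) :
      HasDerivAt φ (⟪gradient F (x + s • h) - gradient F x, h⟫ - K * s * ‖h‖ ^ 2) s := by
    have hline : HasDerivAt (fun s : ℝ ↦ x + s • h) h s := by
      simpa using ((hasDerivAt_id s).smul_const h).const_add x
    have hFline : HasDerivAt (fun s : ℝ ↦ F (x + s • h)) ⟪gradient F (x + s • h), h⟫ s := by
      simpa [Function.comp_def] using
        (hF _).hasGradientAt.hasFDerivAt.comp_hasDerivAt s hline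
    refine ((hFline.sub ((hasDerivAt_id' s).mul_const ⟪gradient F x, h⟫)).sub
      (((hasDerivAt_pow 2 s).const_mul (K / 2 : ℝ)).mul_const (‖h‖ ^ 2))).congr_deriv ?_
    simp only [inner_sub_left]
    ring
  have hanti : AntitoneOn φ (Set.Ici 0) := by
    refine antitoneOn_of_hasDerivWithinAt_nonpos (convex_Ici 0)
      (fun s _ ↦ (hφ s).continuousAt.continuousWithinAt) (fun s _ ↦ (hφ s).hasDerivWithinAt) ?_
    rw [interior_Ici]
    intro s hs
    have hgrad : ‖gradient F (x + s • h) - gradient F x‖ ≤ K * (s * ‖h‖) := by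
      simpa [dist_eq_norm, norm_smul, abs_of_pos (Set.mem_Ioi.mp hs)] using
        hK.dist_le_mul (x + s • h) x
    nlinarith [real_inner_le_norm (gradient F (x + s • h) - gradient F x) h, norm_nonneg h]
  have := hanti Set.self_mem_Ici (Set.mem_Ici.mpr zero_le_one) zero_le_one
  simp only [φ, h, one_smul, zero_smul, add_zero, add_sub_cancel] at this
  linarith

variable {γ b B : ℝ} (G δ e : E)

theorem le_inner_perturbed_direction (hb : 0 ≤ b) (hbγ : b ≤ γ) (hδ : ‖δ‖ ^ 2 ≤ B)
    (he : ‖e‖ ^ 2 ≤ B) :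
    (γ - b) / 2 * ‖G‖ ^ 2 - (γ + b) / 2 * B ≤ ⟪G, γ • G + γ • δ + b • e⟫ := by
  have hδ' := neg_real_inner_le_half_add_sq G δ
  have he' := neg_real_inner_le_half_add_sq G e
  rw [inner_add_right, inner_add_right, real_inner_smul_right, real_inner_smul_right,
    real_inner_smul_right, real_inner_self_eq_norm_sq]
  nlinarith [mul_le_mul_of_nonneg_left hδ' (hb.trans hbγ), mul_le_mul_of_nonneg_left he' hb]

theorem norm_perturbed_direction_sq_le (hδ : ‖δ‖ ^ 2 ≤ B) (he : ‖e‖ ^ 2 ≤ B) :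
    ‖γ • G + γ • δ + b • e‖ ^ 2 ≤ 3 * γ ^ 2 * ‖G‖ ^ 2 + 3 * (γ ^ 2 + b ^ 2) * B := by
  have h := norm_add_add_sq_le (γ • G) (γ • δ) (b • e)
  simp only [norm_smul, mul_pow, Real.norm_eq_abs, sq_abs] at h
  nlinarith [mul_le_mul_of_nonneg_left hδ (sq_nonneg γ),
    mul_le_mul_of_nonneg_left he (sq_nonneg b)]

theorem perturbed_gradient_step_descent [CompleteSpace E] {F : E → ℝ} {K : ℝ≥0}
    (hF : Differentiable ℝ F) (hK : LipschitzWith K (gradient F)) (x : E) {η : ℝ} (hη : 0 ≤ η)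
    (hb : 0 ≤ b) (hbγ : b ≤ γ) (hηK : K * η * γ ^ 2 ≤ (γ - b) / 6)
    (hδ : ‖δ‖ ^ 2 ≤ B) (he : ‖e‖ ^ 2 ≤ B) :
    η * (γ - b) / 4 * ‖gradient F x‖ ^ 2
      ≤ F x - F (x - η • (γ • gradient F x + γ • δ + b • e))
        + η * ((γ + b) / 2 + 3 / 2 * K * η * (γ ^ 2 + b ^ 2)) * B := by
  set G := gradient F x
  set d := γ • G + γ • δ + b • e
  have hdesc := hF.le_add_inner_gradient_add_sq hK x (x - η • d)
  rw [sub_sub_cancel_left, inner_neg_right, real_inner_smul_right, norm_neg, norm_smul,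
    Real.norm_eq_abs, mul_pow, sq_abs] at hdesc
  have hinner := le_inner_perturbed_direction G δ e hb hbγ hδ he
  have hnorm := norm_perturbed_direction_sq_le (γ := γ) (b := b) G δ e hδ he
  have hK0 : (0 : ℝ) ≤ K := K.2
  nlinarith [mul_le_mul_of_nonneg_left hinner hη,
    mul_le_mul_of_nonneg_left hnorm (by positivity : (0 : ℝ) ≤ K / 2 * η ^ 2),
    mul_le_mul_of_nonneg_right hηK (by positivity : (0 : ℝ) ≤ 3 / 2 * η * ‖G‖ ^ 2)]

end PerturbedGradientStep

theorem momentum_update_eq {E : Type*} [AddCommGroup E] [Module ℝ E] {β : ℝ} (hβ : β ≠ 1)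
    (G g m : E) :
    (1 - β) • g + β • (β • m + g)
      = (1 + β ^ 2 / (1 - β)) • G + (1 + β ^ 2 / (1 - β)) • (g - G)
        + β ^ 2 • (m - (1 - β)⁻¹ • g) := by
  have hβ' : 1 - β ≠ 0 := sub_ne_zero.mpr hβ.symm
  match_scalars <;> field_simp <;> ring

theorem inf'_range_le_of_telescoping {a f : ℕ → ℝ} {c D fstar : ℝ} (hc : 0 < c)
    (h : ∀ t, c * a t ≤ f t - f (t + 1) + D) (hf : ∀ t, fstar ≤ f t) {T : ℕ}
    (hT : (range T).Nonempty) :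
    (range T).inf' hT a ≤ (f 0 - fstar) / (c * T) + D / c := by
  have hTpos : (0 : ℝ) < T := by exact_mod_cast Nat.pos_of_ne_zero (nonempty_range_iff.mp hT)
  have hsum : c * ∑ t ∈ range T, a t ≤ f 0 - f T + T * D := by
    calc c * ∑ t ∈ range T, a t ≤ ∑ t ∈ range T, (f t - f (t + 1) + D) := by
          rw [mul_sum]; exact sum_le_sum fun t _ ↦ h t
      _ = f 0 - f T + T * D := by
          rw [sum_add_distrib, sum_range_sub', sum_const, card_range, nsmul_eq_mul]
  have hmin : T * (range T).inf' hT a ≤ ∑ t ∈ range T, a t := by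
    simpa using card_nsmul_le_sum (range T) a _ fun t ht ↦ inf'_le a ht
  have hbound : c * T * (range T).inf' hT a ≤ f 0 - fstar + T * D := by
    nlinarith [hf T, mul_le_mul_of_nonneg_left hmin hc.le]
  calc (range T).inf' hT a ≤ (f 0 - fstar + T * D) / (c * T) := by
        rw [le_div_iff₀ (by positivity)]; linarith
    _ = (f 0 - fstar) / (c * T) + D / c := by field_simp

section Gamma

variable {β γ : ℝ} (hβ0 : 0 < β) (hβ1 : β < 1) (hγ : γ = 1 + β ^ 2 / (1 - β))
include hβ1 hγ

theorem gamma_sub_sq_eq : γ - β ^ 2 = 1 + β ^ 3 / (1 - β) := by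
  have : 1 - β ≠ 0 := by linarith
  rw [hγ]; field_simp; ring

include hβ0 in
theorem one_le_gamma_sub_sq : 1 ≤ γ - β ^ 2 := by
  rw [gamma_sub_sq_eq hβ1 hγ]
  have : 0 < 1 - β := by linarith
  linarith [show 0 ≤ β ^ 3 / (1 - β) by positivity]

include hβ0 in
theorem gamma_add_sq_le : γ + β ^ 2 ≤ 2 + β ^ 2 / (1 - β) := by
  rw [hγ]; nlinarith

include hβ0 in
theorem gamma_sq_add_pow_four_le : γ ^ 2 + β ^ 4 ≤ 2 + 2 / (1 - β) ^ 2 := by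
  have hu : 0 < 1 - β := by linarith
  have hγu : γ ≤ 1 / (1 - β) := by
    rw [hγ, le_div_iff₀ hu]; field_simp; nlinarith
  have hγ0 : 0 ≤ γ := by rw [hγ]; positivity
  have : γ ^ 2 ≤ 1 / (1 - β) ^ 2 := by rw [one_div, ← inv_pow, ← one_div]; gcongr
  have : β ^ 4 ≤ 1 := pow_le_one₀ hβ0.le hβ1.le
  linarith [show 0 ≤ 1 / (1 - β) ^ 2 by positivity,
    show 2 / (1 - β) ^ 2 = 2 * (1 / (1 - β) ^ 2) by ring]

include hβ0 in
theorem halos_noise_coeff_le {L η0 : ℝ} (hL : 0 ≤ L) (hη0 : 0 ≤ η0) :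
    4 * ((γ + β ^ 2) / 2 + 3 / 2 * L * η0 * (γ ^ 2 + β ^ 4)) / (γ - β ^ 2)
      ≤ (6 + 24 * L * η0 + 24 * L * η0 / (1 - β) ^ 2) / β ^ 3 := by
  have hu : 0 < 1 - β := by linarith
  have hP : 0 < γ - β ^ 2 := by linarith [one_le_gamma_sub_sq hβ0 hβ1 hγ]
  have hβ3 : β ^ 3 ≤ (1 - β) * (γ - β ^ 2) := by
    rw [gamma_sub_sq_eq hβ1 hγ, mul_add, mul_div_cancel₀ _ hu.ne']
    linarith
  set v := 1 / (1 - β) with hv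
  have hv1 : 1 ≤ v := by rw [hv, le_div_iff₀ hu]; linarith
  have hsum : γ + β ^ 2 ≤ 2 + β ^ 2 * v := by
    rw [hv, ← div_eq_mul_one_div]; exact gamma_add_sq_le hβ0 hβ1 hγ
  have hsq : γ ^ 2 + β ^ 4 ≤ 2 + 2 * v ^ 2 := by
    rw [hv, div_pow, one_pow, ← div_eq_mul_one_div]; exact gamma_sq_add_pow_four_le hβ0 hβ1 hγ
  have hC : 0 ≤ 4 * ((γ + β ^ 2) / 2 + 3 / 2 * L * η0 * (γ ^ 2 + β ^ 4)) := by
    have : 0 ≤ γ := by rw [hγ]; positivity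
    positivity
  have hM : 4 * ((γ + β ^ 2) / 2 + 3 / 2 * L * η0 * (γ ^ 2 + β ^ 4)) * (1 - β)
      ≤ 6 + 24 * L * η0 + 24 * L * η0 / (1 - β) ^ 2 := by
    have hLη : 0 ≤ L * η0 := mul_nonneg hL hη0
    have huv : (1 - β) * v = 1 := by rw [hv]; field_simp
    rw [show 24 * L * η0 / (1 - β) ^ 2 = 24 * (L * η0) * v ^ 2 by
      rw [hv, div_pow, one_pow]; ring]
    nlinarith [mul_le_mul_of_nonneg_left hsum hu.le,
      mul_le_mul_of_nonneg_left hsq (mul_nonneg hLη hu.le),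
      mul_le_mul_of_nonneg_left hv1 (mul_nonneg hLη (by positivity : (0 : ℝ) ≤ v))]
  rw [div_le_div_iff₀ hP (by positivity)]
  calc _ ≤ 4 * ((γ + β ^ 2) / 2 + 3 / 2 * L * η0 * (γ ^ 2 + β ^ 4)) * ((1 - β) * (γ - β ^ 2)) :=
        mul_le_mul_of_nonneg_left hβ3 hC
    _ ≤ _ := by rw [← mul_assoc]; exact mul_le_mul_of_nonneg_right hM hP.le

end Gamma

theorem halos_step_descent {E : Type*} [NormedAddCommGroup E] [InnerProductSpace ℝ E]
    [CompleteSpace E] {F : E → ℝ} {L : ℝ} (hL : 0 < L) (hF : Differentiable ℝ F)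
    (hLip : ∀ x y : E, ‖gradient F x - gradient F y‖ ≤ L * ‖x - y‖)
    {β γ : ℝ} (hβ0 : 0 < β) (hβ1 : β < 1) (hγ : γ = 1 + β ^ 2 / (1 - β))
    {ηm η η0 B : ℝ} (hηm : 0 ≤ ηm) (hηm_le : ηm ≤ η) (hη_le : η ≤ η0)
    (hη0 : η0 ≤ (γ - β ^ 2) / (6 * L * γ ^ 2)) (hB : 0 ≤ B) {x g m : E}
    (hg : ‖g - gradient F x‖ ^ 2 ≤ B) (hm : ‖m - (1 - β)⁻¹ • g‖ ^ 2 ≤ B) :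
    ηm * (γ - β ^ 2) / 4 * ‖gradient F x‖ ^ 2
      ≤ F x - F (x - η • ((1 - β) • g + β • (β • m + g)))
        + η0 * ((γ + β ^ 2) / 2 + 3 / 2 * L * η0 * (γ ^ 2 + β ^ 4)) * B := by
  have hK : LipschitzWith (Real.toNNReal L) (gradient F) :=
    LipschitzWith.of_dist_le' (by simpa only [dist_eq_norm] using hLip)
  have hKL : (Real.toNNReal L : ℝ) = L := Real.coe_toNNReal L hL.le
  have hP := one_le_gamma_sub_sq hβ0 hβ1 hγ
  have hγ0 : 0 < γ := by nlinarith
  have hη : 0 ≤ η := hηm.trans hηm_le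
  have hstep : Real.toNNReal L * η * γ ^ 2 ≤ (γ - β ^ 2) / 6 := by
    rw [hKL]
    rw [le_div_iff₀ (by positivity)] at hη0
    nlinarith [mul_le_mul_of_nonneg_left hη_le (by positivity : 0 ≤ 6 * L * γ ^ 2)]
  have hdesc := perturbed_gradient_step_descent (g - gradient F x)
    (m - (1 - β)⁻¹ • g) hF hK x hη (sq_nonneg β) (by linarith) hstep hg hm
  rw [hKL, show (β ^ 2) ^ 2 = β ^ 4 by ring] at hdesc
  rw [momentum_update_eq hβ1.ne (gradient F x) g m, ← hγ]
  calc ηm * (γ - β ^ 2) / 4 * ‖gradient F x‖ ^ 2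
      ≤ η * (γ - β ^ 2) / 4 * ‖gradient F x‖ ^ 2 := by gcongr
    _ ≤ _ := hdesc
    _ ≤ _ := by gcongr; linarith

/-- Convergence of the HALoS global-server momentum recursion (Theorem 1, descent form). -/
theorem halos_convergence_paper_form
    {E : Type*} [NormedAddCommGroup E] [InnerProductSpace ℝ E] [CompleteSpace E]
    (F : E → ℝ) (L : ℝ) (hL : 0 < L)
    (hF : Differentiable ℝ F)
    (hLip : ∀ x y : E, ‖gradient F x - gradient F y‖ ≤ L * ‖x - y‖)
    (Fstar : ℝ) (hbdd : ∀ x : E, F x ≥ Fstar)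
    (β : ℝ) (hβ0 : 0 < β) (hβ1 : β < 1)
    (γ : ℝ) (hγ : γ = 1 + β ^ 2 / (1 - β))
    (Θ g m : ℕ → E) (η : ℕ → ℝ) (ηm η0 : ℝ)
    (hmrec : ∀ t : ℕ, m (t + 1) = β • m t + g t)
    (hΘrec : ∀ t : ℕ, Θ (t + 1) = Θ t - η t • ((1 - β) • g t + β • m (t + 1)))
    (hηm : 0 < ηm)
    (hηlb : ∀ t : ℕ, ηm ≤ η t) (hηub : ∀ t : ℕ, η t ≤ η0)
    (hη0 : η0 ≤ (γ - β ^ 2) / (6 * L * γ ^ 2))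
    (B : ℝ) (hB : 0 ≤ B)
    (hg : ∀ t : ℕ, ‖g t - gradient F (Θ t)‖ ^ 2 ≤ B)
    (hmom : ∀ t : ℕ, ‖m t - (1 - β)⁻¹ • g t‖ ^ 2 ≤ B) :
    ∀ T : ℕ, ∀ _hT : 1 ≤ T,
      (Finset.range T).inf' (Finset.nonempty_range_iff.mpr (by omega))
          (fun t => ‖gradient F (Θ t)‖ ^ 2)
        ≤ (4 * (F (Θ 0) - Fstar) / (ηm * T)) * (1 + 1 / (1 - β))
          + (η0 / (ηm * β ^ 3)) * (6 + 24 * L * η0 + 24 * L * η0 / (1 - β) ^ 2) * B := by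
  intro T hT
  have hP := one_le_gamma_sub_sq hβ0 hβ1 hγ
  have hη0pos : 0 < η0 := hηm.trans_le ((hηlb 0).trans (hηub 0))
  have hstep (t : ℕ) := halos_step_descent hL hF hLip hβ0 hβ1 hγ hηm.le (hηlb t) (hηub t) hη0 hB
    (hg t) (hmom t)
  simp only [← hmrec, ← hΘrec] at hstep
  refine (inf'_range_le_of_telescoping (by positivity) hstep (fun t ↦ hbdd (Θ t)) _).trans ?_
  have hF0 : 0 ≤ F (Θ 0) - Fstar := sub_nonneg.mpr (hbdd _)
  gcongr ?_ + ?_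
  · calc (F (Θ 0) - Fstar) / (ηm * (γ - β ^ 2) / 4 * T)
        = 4 * (F (Θ 0) - Fstar) / (ηm * T) * (1 / (γ - β ^ 2)) := by field_simp
      _ ≤ 4 * (F (Θ 0) - Fstar) / (ηm * T) * (1 + 1 / (1 - β)) := by
        gcongr
        have : 0 ≤ 1 / (1 - β) := by rw [one_div_nonneg]; linarith
        linarith [(div_le_one (by positivity)).mpr hP]
  · set C := (γ + β ^ 2) / 2 + 3 / 2 * L * η0 * (γ ^ 2 + β ^ 4)
    calc η0 * C * B / (ηm * (γ - β ^ 2) / 4) = η0 / ηm * (4 * C / (γ - β ^ 2)) * B := by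
          field_simp
      _ ≤ η0 / ηm * ((6 + 24 * L * η0 + 24 * L * η0 / (1 - β) ^ 2) / β ^ 3) * B := by
          gcongr η0 / ηm * ?_ * B
          exact halos_noise_coeff_le hβ0 hβ1 hγ hL.le hη0pos.le
      _ = _ := by ring
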